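/- For every N ∈ ℕ, every a, b > 0 and all x, z ∈ ℝ^N_<, the Karlin–McGregor determinants satisfy the semigroup (Chapman–Kolmogorov) property on the Weyl chamber: ∫_{ℝ^N_<} f_N(a; x, y) f_N(b; y, z) dy = f_N(a+b; x, z). -/

import Mathlib

/-!
Expanding both determinants over permutations, the integral of `f_N(a; x, y) f_N(b; y, z)` over
all of `ℝ^N` factorises coordinatewise, and the one-dimensional Chapman–Kolmogorov identity
`∫ p_a(x, y) p_b(y, z) dy = p_{a+b}(x, z)` collapses it to `N! f_N(a + b; x, z)` (Andréief's
identity). Permuting the coordinates of `y` changes the sign of both determinants, so the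
integrand is symmetric; since the images of the chamber under the `N!` coordinate permutations
tile `ℝ^N` up to the null set where two coordinates coincide, the integral over `ℝ^N` is `N!`
times the integral over the chamber.
-/

open MeasureTheory

/-- The heat kernel `p_t(x,y) = (2πt)^{-1/2} exp(-(x-y)²/(2t))`. -/
noncomputable def heatKernel (t x y : ℝ) : ℝ :=
  (1 / Real.sqrt (2 * Real.pi * t)) * Real.exp (-(x - y)^2 / (2 * t))

/-- The Weyl chamber `ℝ^N_< = {x : x_1 < x_2 < ⋯ < x_N}`. -/
def weylChamber (N : ℕ) : Set (Fin N → ℝ) := {x | StrictMono x}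

/-- The Karlin–McGregor determinant `f_N(t; x, y) = det[p_t(x_i, y_j)]`. -/
noncomputable def fKM (N : ℕ) (t : ℝ) (x y : Fin N → ℝ) : ℝ :=
  Matrix.det (Matrix.of fun i j => heatKernel t (x i) (y j))

/-- The non-colliding probability `𝒩_N(t; x) = ∫_{ℝ^N_<} f_N(t; x, y) dy`. -/
noncomputable def NKM (N : ℕ) (t : ℝ) (x : Fin N → ℝ) : ℝ :=
  ∫ y in weylChamber N, fKM N t x y

open Real ProbabilityTheory Matrix Equiv Function

section HeatKernel

/- For `t ≤ 0` both sides vanish: `√(2πt) = 0` and `0⁻¹ = 0`. -/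
theorem heatKernel_eq_gaussianPDFReal (t x y : ℝ) :
    heatKernel t x y = gaussianPDFReal x t.toNNReal y := by
  rcases le_or_gt t 0 with ht | ht
  · simp [heatKernel, gaussianPDFReal, Real.toNNReal_of_nonpos ht, Real.sqrt_eq_zero_of_nonpos,
      Real.pi_pos.le, ht]
  · rw [heatKernel, gaussianPDFReal, Real.coe_toNNReal _ ht.le, one_div, ← neg_sub y x, neg_sq]

variable {a b : ℝ}

/- The second factor is the density at time `a` of the Brownian bridge from `x` (time `0`)
to `z` (time `a + b`). -/
theorem heatKernel_mul_heatKernel (ha : 0 < a) (hb : 0 < b) (x y z : ℝ) :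
    heatKernel a x y * heatKernel b y z =
      heatKernel (a + b) x z * heatKernel (a * b / (a + b)) ((b * x + a * z) / (a + b)) y := by
  have hconst : 1 / √(2 * π * a) * (1 / √(2 * π * b)) =
      1 / √(2 * π * (a + b)) * (1 / √(2 * π * (a * b / (a + b)))) := by
    rw [div_mul_div_comm, div_mul_div_comm, ← Real.sqrt_mul (by positivity),
      ← Real.sqrt_mul (by positivity)]
    congr 2
    field_simp
  have hexp : -(x - y) ^ 2 / (2 * a) + -(y - z) ^ 2 / (2 * b) =
      -(x - z) ^ 2 / (2 * (a + b)) +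
        -((b * x + a * z) / (a + b) - y) ^ 2 / (2 * (a * b / (a + b))) := by
    field_simp
    ring
  unfold heatKernel
  rw [mul_mul_mul_comm, ← Real.exp_add, hexp, Real.exp_add, hconst]
  ring

theorem integrable_heatKernel_mul_heatKernel (ha : 0 < a) (hb : 0 < b) (x z : ℝ) :
    Integrable fun y => heatKernel a x y * heatKernel b y z := by
  simp_rw [heatKernel_mul_heatKernel ha hb, heatKernel_eq_gaussianPDFReal]
  exact (integrable_gaussianPDFReal _ _).const_mul _

theorem integral_heatKernel_mul_heatKernel (ha : 0 < a) (hb : 0 < b) (x z : ℝ) :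
    ∫ y, heatKernel a x y * heatKernel b y z = heatKernel (a + b) x z := by
  simp_rw [heatKernel_mul_heatKernel ha hb, heatKernel_eq_gaussianPDFReal]
  rw [integral_const_mul, integral_gaussianPDFReal_eq_one _ (by positivity), mul_one]

end HeatKernel

section Andreief

variable {ι α 𝕜 : Type*} [Fintype ι] [DecidableEq ι] [RCLike 𝕜]

local notation "ε " σ:arg => ((Perm.sign σ : ℤ) : 𝕜)

theorem Equiv.Perm.sign_mul_sign_self (σ : Perm ι) : ε σ * ε σ = 1 := by
  rw [← Int.cast_mul, ← Units.val_mul, Int.units_mul_self, Units.val_one, Int.cast_one]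

theorem Matrix.det_eq_sum_sign_mul_prod_apply_perm (M : Matrix ι ι 𝕜) :
    M.det = ∑ τ : Perm ι, ε τ * ∏ i, M i (τ i) := by
  rw [← det_transpose, det_apply']
  rfl

theorem Matrix.sum_sign_mul_prod_apply_perm_apply_perm (M : Matrix ι ι 𝕜) (σ : Perm ι) :
    ∑ τ : Perm ι, ε τ * ∏ i, M (σ i) (τ i) = ε σ * M.det := by
  rw [← det_permute, det_eq_sum_sign_mul_prod_apply_perm]
  rfl

variable {K : ι → α → 𝕜} {L : α → ι → 𝕜}

theorem det_of_mul_det_of (y : ι → α) :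
    (of fun i j => K i (y j)).det * (of fun i j => L (y i) j).det =
      ∑ σ : Perm ι, ∑ τ : Perm ι, (ε σ * ε τ) * ∏ i, K (σ i) (y i) * L (y i) (τ i) := by
  rw [det_apply', det_eq_sum_sign_mul_prod_apply_perm, Finset.sum_mul_sum]
  refine Finset.sum_congr rfl fun σ _ => Finset.sum_congr rfl fun τ _ => ?_
  simp only [of_apply, Finset.prod_mul_distrib]
  ring

variable [MeasurableSpace α] {μ : Measure α} [SigmaFinite μ]

theorem integrable_det_mul_det (hKL : ∀ i j, Integrable (fun y => K i y * L y j) μ) :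
    Integrable (fun y : ι → α => (of fun i j => K i (y j)).det * (of fun i j => L (y i) j).det)
      (Measure.pi fun _ => μ) := by
  simp_rw [det_of_mul_det_of]
  exact integrable_finsetSum _ fun σ _ => integrable_finsetSum _ fun τ _ =>
    (Integrable.fintype_prod fun i => hKL (σ i) (τ i)).const_mul _

/-- **Andréief's identity**, a continuous Cauchy–Binet formula. -/
theorem integral_det_mul_det (hKL : ∀ i j, Integrable (fun y => K i y * L y j) μ) :
    ∫ y, (of fun i j => K i (y j)).det * (of fun i j => L (y i) j).det ∂Measure.pi (fun _ => μ) =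
      (Fintype.card ι).factorial * (of fun i j => ∫ y, K i y * L y j ∂μ).det := by
  set M := of fun i j => ∫ y, K i y * L y j ∂μ
  have hint : ∀ σ τ : Perm ι, Integrable (fun y : ι → α =>
      (ε σ * ε τ) * ∏ i, K (σ i) (y i) * L (y i) (τ i)) (Measure.pi fun _ => μ) :=
    fun σ τ => (Integrable.fintype_prod fun i => hKL (σ i) (τ i)).const_mul _
  have hterm : ∀ σ τ : Perm ι,
      ∫ y, (ε σ * ε τ) * ∏ i, K (σ i) (y i) * L (y i) (τ i) ∂Measure.pi (fun _ => μ) =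
        (ε σ * ε τ) * ∏ i, M (σ i) (τ i) := fun σ τ => by
    rw [integral_const_mul, integral_fintype_prod_eq_prod (f := fun i y => K (σ i) y * L y (τ i))]
    rfl
  calc _ = ∑ σ : Perm ι, ∑ τ : Perm ι, (ε σ * ε τ) * ∏ i, M (σ i) (τ i) := by
        simp_rw [det_of_mul_det_of]
        rw [integral_finsetSum _ fun σ _ => integrable_finsetSum _ fun τ _ => hint σ τ]
        refine Finset.sum_congr rfl fun σ _ => ?_
        rw [integral_finsetSum _ fun τ _ => hint σ τ]
        exact Finset.sum_congr rfl fun τ _ => hterm σ τ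
    _ = ∑ _σ : Perm ι, M.det := by
        refine Finset.sum_congr rfl fun σ _ => ?_
        simp_rw [mul_assoc, ← Finset.mul_sum, sum_sign_mul_prod_apply_perm_apply_perm,
          ← mul_assoc, Perm.sign_mul_sign_self, one_mul]
    _ = _ := by
        rw [Finset.sum_const, Finset.card_univ, Fintype.card_perm, nsmul_eq_mul]

end Andreief

section PermuteCoordinates

variable {ι α E : Type*} [MeasurableSpace α] [NormedAddCommGroup E] [NormedSpace ℝ E]

theorem MeasurableEquiv.coe_piCongrLeft_symm_perm (σ : Perm ι) :
    ⇑(MeasurableEquiv.piCongrLeft (fun _ => α) σ.symm) = fun y => y ∘ σ := by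
  ext y i
  simp [MeasurableEquiv.coe_piCongrLeft, Equiv.piCongrLeft_apply_eq_cast]

theorem setIntegral_preimage_comp_perm [Fintype ι] {μ : Measure α} [SigmaFinite μ]
    {F : (ι → α) → E} (hF : ∀ σ : Perm ι, ∀ y, F (y ∘ σ) = F y) (σ : Perm ι) (s : Set (ι → α)) :
    ∫ y in (fun y => y ∘ σ) ⁻¹' s, F y ∂Measure.pi (fun _ => μ) =
      ∫ y in s, F y ∂Measure.pi (fun _ => μ) := by
  have hmp := measurePreserving_piCongrLeft (fun _ => μ) σ.symm
  have hemb := (MeasurableEquiv.piCongrLeft (fun _ => α) σ.symm).measurableEmbedding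
  rw [MeasurableEquiv.coe_piCongrLeft_symm_perm] at hmp hemb
  rw [← hmp.setIntegral_preimage_emb hemb F s]
  simp only [hF]

end PermuteCoordinates

section WeylChamber

theorem volume_setOf_not_injective (ι : Type*) [Fintype ι] :
    volume {y : ι → ℝ | ¬ Injective y} = 0 := by
  classical
  have hsub : {y : ι → ℝ | ¬ Injective y} ⊆
      ⋃ i, ⋃ j, ⋃ (_ : i ≠ j), {y : ι → ℝ | y i = y j} := by
    intro y hy
    simp only [Injective, not_forall] at hy
    obtain ⟨i, j, hij, hne⟩ := hy
    exact Set.mem_iUnion.2 ⟨i, Set.mem_iUnion.2 ⟨j, Set.mem_iUnion.2 ⟨hne, hij⟩⟩⟩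
  refine measure_mono_null hsub ?_
  refine measure_iUnion_null fun i => measure_iUnion_null fun j => measure_iUnion_null fun hij => ?_
  have hker : {y : ι → ℝ | y i = y j} =
      LinearMap.ker ((LinearMap.proj i : (ι → ℝ) →ₗ[ℝ] ℝ) - LinearMap.proj j) := by
    ext y
    simp [sub_eq_zero]
  rw [hker]
  refine Measure.addHaar_submodule _ _ fun htop => ?_
  have hmem := (Submodule.eq_top_iff'.mp htop) (Pi.single i 1)
  simp [Pi.single_eq_of_ne (Ne.symm hij)] at hmem

theorem measurableSet_weylChamber (N : ℕ) : MeasurableSet (weylChamber N) := by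
  have : weylChamber N = ⋂ i, ⋂ j, ⋂ (_ : i < j), {y : Fin N → ℝ | y i < y j} := by
    ext y
    simp [weylChamber, StrictMono]
  rw [this]
  exact .iInter fun i => .iInter fun j => .iInter fun _ =>
    measurableSet_lt (measurable_pi_apply i) (measurable_pi_apply j)

variable {N : ℕ}

theorem pairwise_disjoint_preimage_comp_perm_weylChamber :
    Pairwise (Disjoint on fun σ : Perm (Fin N) => (fun y => y ∘ σ) ⁻¹' weylChamber N) := by
  intro σ τ hστ
  refine Set.disjoint_left.2 fun y (hσ : StrictMono (y ∘ σ)) (hτ : StrictMono (y ∘ τ)) => hστ ?_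
  have hy : Injective y := hσ.injective.of_comp_right σ.surjective
  have heq : y ∘ σ = y ∘ τ := Tuple.unique_monotone hσ.monotone hτ.monotone
  exact Equiv.ext fun i => hy (congrFun heq i)

theorem ae_mem_iUnion_preimage_comp_perm_weylChamber :
    ∀ᵐ y : Fin N → ℝ, y ∈ ⋃ σ : Perm (Fin N), (fun y => y ∘ σ) ⁻¹' weylChamber N := by
  refine measure_mono_null (fun y (hy : y ∉ _) (hinj : Injective y) => hy ?_)
    (volume_setOf_not_injective (Fin N))
  exact Set.mem_iUnion.2 ⟨Tuple.sort y,
    (Tuple.monotone_sort y).strictMono_of_injective (hinj.comp (Tuple.sort y).injective)⟩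

theorem integral_eq_factorial_smul_setIntegral_weylChamber {E : Type*} [NormedAddCommGroup E]
    [NormedSpace ℝ E] {F : (Fin N → ℝ) → E} (hF : Integrable F)
    (hsym : ∀ σ : Perm (Fin N), ∀ y, F (y ∘ σ) = F y) :
    ∫ y, F y = N.factorial • ∫ y in weylChamber N, F y := by
  have hmeas : ∀ σ : Perm (Fin N), MeasurableSet ((fun y => y ∘ σ) ⁻¹' weylChamber N) := by
    intro σ
    rw [← MeasurableEquiv.coe_piCongrLeft_symm_perm]
    exact (measurableSet_weylChamber N).preimage (MeasurableEquiv.measurable _)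
  calc ∫ y, F y = ∫ y in ⋃ σ : Perm (Fin N), (fun y => y ∘ σ) ⁻¹' weylChamber N, F y := by
        rw [Measure.restrict_eq_self_of_ae_mem ae_mem_iUnion_preimage_comp_perm_weylChamber]
    _ = ∑ σ : Perm (Fin N), ∫ y in (fun y => y ∘ σ) ⁻¹' weylChamber N, F y :=
        integral_iUnion_fintype hmeas pairwise_disjoint_preimage_comp_perm_weylChamber
          fun _ => hF.integrableOn
    _ = ∑ _σ : Perm (Fin N), ∫ y in weylChamber N, F y :=
        Finset.sum_congr rfl fun σ _ => setIntegral_preimage_comp_perm hsym σ _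
    _ = _ := by
        rw [Finset.sum_const, Finset.card_univ, Fintype.card_perm, Fintype.card_fin]

end WeylChamber

section KarlinMcGregor

variable {N : ℕ} {a b : ℝ}

theorem integrable_fKM_mul_fKM (ha : 0 < a) (hb : 0 < b) (x z : Fin N → ℝ) :
    Integrable fun y => fKM N a x y * fKM N b y z :=
  integrable_det_mul_det (K := fun i y => heatKernel a (x i) y)
    (L := fun y j => heatKernel b y (z j)) fun _ _ => integrable_heatKernel_mul_heatKernel ha hb _ _

theorem integral_fKM_mul_fKM (ha : 0 < a) (hb : 0 < b) (x z : Fin N → ℝ) :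
    ∫ y, fKM N a x y * fKM N b y z = N.factorial * fKM N (a + b) x z := by
  have h := integral_det_mul_det (μ := volume) (K := fun i y => heatKernel a (x i) y)
    (L := fun y j => heatKernel b y (z j)) fun _ _ => integrable_heatKernel_mul_heatKernel ha hb _ _
  simp only [integral_heatKernel_mul_heatKernel ha hb, Fintype.card_fin] at h
  exact h

theorem fKM_comp_perm_right (t : ℝ) (x y : Fin N → ℝ) (σ : Perm (Fin N)) :
    fKM N t x (y ∘ σ) = Perm.sign σ * fKM N t x y :=
  det_permute' σ (of fun i j => heatKernel t (x i) (y j))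

theorem fKM_comp_perm_left (t : ℝ) (x y : Fin N → ℝ) (σ : Perm (Fin N)) :
    fKM N t (x ∘ σ) y = Perm.sign σ * fKM N t x y :=
  det_permute σ (of fun i j => heatKernel t (x i) (y j))

theorem fKM_mul_fKM_comp_perm (x z y : Fin N → ℝ) (σ : Perm (Fin N)) :
    fKM N a x (y ∘ σ) * fKM N b (y ∘ σ) z = fKM N a x y * fKM N b y z := by
  rw [fKM_comp_perm_right, fKM_comp_perm_left, mul_mul_mul_comm, Perm.sign_mul_sign_self, one_mul]

end KarlinMcGregor

theorem karlinMcGregor_chapman_kolmogorov_general (N : ℕ) (a b : ℝ) (ha : 0 < a) (hb : 0 < b)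
    (x z : Fin N → ℝ) :
    ∫ y in weylChamber N, fKM N a x y * fKM N b y z = fKM N (a + b) x z := by
  have hsym := integral_eq_factorial_smul_setIntegral_weylChamber
    (integrable_fKM_mul_fKM ha hb x z) fun σ y => fKM_mul_fKM_comp_perm x z y σ
  rw [integral_fKM_mul_fKM ha hb, nsmul_eq_mul] at hsym
  exact (mul_left_cancel₀ (Nat.cast_ne_zero.2 N.factorial_ne_zero) hsym).symm

/-- Chapman–Kolmogorov (semigroup) property of the Karlin–McGregor determinants
on the Weyl chamber. -/
theorem karlinMcGregor_chapman_kolmogorov (N : ℕ) (a b : ℝ) (ha : 0 < a) (hb : 0 < b)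
    (x z : Fin N → ℝ) (hx : x ∈ weylChamber N) (hz : z ∈ weylChamber N) :
    ∫ y in weylChamber N, fKM N a x y * fKM N b y z = fKM N (a + b) x z :=
  karlinMcGregor_chapman_kolmogorov_general N a b ha hb x z
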